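/- arXiv:2012.08268 — 7 statements merged into one kernel-verified Lean document; each statement's English description precedes it below -/
import Mathlib

section
/- Let R be a closed relation K1 → K2 and S a closed relation K2 → K3 between formal contexts. Then for every subset A ⊆ G1 one has cl((S ∘ R)(A)) = cl(S(R(A))), where (S ∘ R)(g) := cl(S(R(g))) and all closures on the object side of K3 are taken in K3. -/
open Set

/-- A formal context `(G, M, I)`: a set of objects, a set of attributes,
and an incidence relation between them. -/
structure FormalContext where
  G : Type*
  M : Type*
  I : G → M → Prop

namespace FormalContext

variable (K : FormalContext)

/-- `A'` for a set of objects `A ⊆ G`. -/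
def polarG (A : Set K.G) : Set K.M := upperPolar K.I A

/-- `B'` for a set of attributes `B ⊆ M`. -/
def polarM (B : Set K.M) : Set K.G := lowerPolar K.I B

/-- The closure `cl(A) = A''` of a set of objects. -/
def clG (A : Set K.G) : Set K.G := K.polarM (K.polarG A)

/-- The closure `cl(B) = B''` of a set of attributes. -/
def clM (B : Set K.M) : Set K.M := K.polarG (K.polarM B)

/-- A set of objects is closed when it equals its closure. -/
def ClosedG (A : Set K.G) : Prop := K.clG A = A

/-- A set of attributes is closed when it equals its closure. -/
def ClosedM (B : Set K.M) : Prop := K.clM B = B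

/-- The dual context `K* = (M, G, I†)`. -/
def dual : FormalContext := ⟨K.M, K.G, fun m g => K.I g m⟩

/-- The direct product `K1 ⊗ K2` of formal contexts (Ganter–Wille). -/
def dprod (K1 K2 : FormalContext) : FormalContext :=
  ⟨K1.G × K2.G, K1.M × K2.M, fun g m => K1.I g.1 m.1 ∨ K2.I g.2 m.2⟩

end FormalContext

/-- The trivial context `I = ({⋆},{⋆},≠)`. -/
def trivCxt : FormalContext := ⟨PUnit, PUnit, fun a b => a ≠ b⟩

/-- The image `R(S)` of a set under a relation. -/
def relImage {X Y : Type*} (R : X → Y → Prop) (S : Set X) : Set Y :=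
  {y | ∃ x ∈ S, R x y}

/-- `R^•(T) = {x | R(x) ⊆ T}`. -/
def relDot {X Y : Type*} (R : X → Y → Prop) (T : Set Y) : Set X :=
  {x | ∀ y, R x y → y ∈ T}

/-- `R_•(S) = {y | ∀ x ∈ S, R(x,y)}`. -/
def relLower {X Y : Type*} (R : X → Y → Prop) (S : Set X) : Set Y :=
  {y | ∀ x ∈ S, R x y}

/-- A closed relation `K1 → K2`: each row `R(g)` is closed in `K2` and
`R^•` preserves closed sets. -/
structure IsClosedRel (K1 K2 : FormalContext) (R : K1.G → K2.G → Prop) : Prop where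
  row_closed : ∀ g : K1.G, K2.ClosedG (relImage R {g})
  dot_closed : ∀ Y : Set K2.G, K2.ClosedG Y → K1.ClosedG (relDot R Y)

/-- Composition of closed relations: `(S ∘ R)(g) := cl(S(R(g)))`, closure in `K`. -/
def relComp {X Y : Type*} (K : FormalContext) (S : Y → K.G → Prop) (R : X → Y → Prop) :
    X → K.G → Prop :=
  fun g h => h ∈ K.clG (relImage S (relImage R {g}))

/-- Composition on the attribute side: `(S ∘ R)(m) := cl(S(R(m)))`, closure on the
attribute side of `K`. -/
def relCompM {X Y : Type*} (K : FormalContext) (S : Y → K.M → Prop) (R : X → Y → Prop) :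
    X → K.M → Prop :=
  fun m n => n ∈ K.clM (relImage S (relImage R {m}))

/-- The identity closed relation on `K`: `g ↦ cl({g})`. -/
def idClosedRel (K : FormalContext) : K.G → K.G → Prop := fun g h => h ∈ K.clG {g}

/-- A Chu correspondence `(R,S) : K1 → K2`. -/
structure IsChu (K1 K2 : FormalContext) (R : K1.G → K2.G → Prop) (S : K2.M → K1.M → Prop) :
    Prop where
  extent_closed : ∀ g : K1.G, K2.ClosedG (relImage R {g})
  intent_closed : ∀ m : K2.M, K1.ClosedM (relImage S {m})
  adj : ∀ (g : K1.G) (m : K2.M),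
    (∀ h ∈ relImage R {g}, K2.I h m) ↔ (∀ n ∈ relImage S {m}, K1.I g n)

/-- The intent relation `R*(m) := (R^•(m'))'` of a (closed) relation `R`. -/
def starRel (K1 K2 : FormalContext) (R : K1.G → K2.G → Prop) : K2.M → K1.M → Prop :=
  fun m n => n ∈ K1.polarG (relDot R (K2.polarM {m}))

/-- A bond from `K1` to `K2`: a relation `B ⊆ G1 × M2` with closed rows and columns. -/
structure IsBond (K1 K2 : FormalContext) (B : K1.G → K2.M → Prop) : Prop where
  row_closed : ∀ g : K1.G, K2.ClosedM (relImage B {g})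
  col_closed : ∀ m : K2.M, K1.ClosedG {g | B g m}

/-- The tensor `(R1 ⊗ R2)(g1,g2) := cl(R1(g1) × R2(g2))` of relations, closure in `K3 ⊗ K4`. -/
def tensorRelMor (K3 K4 : FormalContext) {X Y : Type*}
    (R1 : X → K3.G → Prop) (R2 : Y → K4.G → Prop) :
    X × Y → (K3.dprod K4).G → Prop :=
  fun p q => q ∈ (K3.dprod K4).clG (relImage R1 {p.1} ×ˢ relImage R2 {p.2})

/-- The concept of `K` generated by a set of objects `A`: `(cl(A), A')`. -/
def conceptOfSet (K : FormalContext) (A : Set K.G) : Concept K.G K.M K.I where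
  extent := K.clG A
  intent := K.polarG A
  upperPolar_extent := upperPolar_lowerPolar_upperPolar K.I A
  lowerPolar_intent := rfl

/-- The sup-lattice map `ℬ(R)` on concept lattices induced by a relation:
`(A,A') ↦ (cl(R(A)), R(A)')`. -/
def conceptMap (K1 K2 : FormalContext) (R : K1.G → K2.G → Prop) :
    Concept K1.G K1.M K1.I → Concept K2.G K2.M K2.I :=
  fun c => conceptOfSet K2 (relImage R c.extent)

/-- The incidence relation of the context whose concept lattice is the concept tensor
`V1 ⊗ V2`: `(x,y) ∇ (w,z) iff x ≤ w or y ≤ z`. -/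
def tensorRel (V1 V2 : Type*) [CompleteLattice V1] [CompleteLattice V2] :
    V1 × V2 → V1 × V2 → Prop :=
  fun p q => p.1 ≤ q.1 ∨ p.2 ≤ q.2

/-- The concept tensor `V1 ⊗ V2` of complete lattices (Wille's tensor product). -/
abbrev ConceptTensor (V1 V2 : Type*) [CompleteLattice V1] [CompleteLattice V2] :=
  Concept (V1 × V2) (V1 × V2) (tensorRel V1 V2)

/-- The tensorial operation `x ⊼ y`: the concept with extent `cl{(x,y)}` and
intent `{(x,y)}'`. -/
def wedge {V1 V2 : Type*} [CompleteLattice V1] [CompleteLattice V2] (x : V1) (y : V2) :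
    ConceptTensor V1 V2 where
  extent := lowerPolar (tensorRel V1 V2) (upperPolar (tensorRel V1 V2) {(x, y)})
  intent := upperPolar (tensorRel V1 V2) {(x, y)}
  upperPolar_extent := upperPolar_lowerPolar_upperPolar _ _
  lowerPolar_intent := rfl

/-- Two subsets of a complete lattice are mutually distributive: all families indexed
by a set `ι` satisfy the two distributivity laws. -/
def MutuallyDistrib {M : Type u} [CompleteLattice M] (X Y : Set M) : Prop :=
  ∀ (ι : Type u) (x y : ι → M), (∀ i, x i ∈ X) → (∀ i, y i ∈ Y) →
    ((⨆ i, x i ⊓ y i) = ⨅ J : Set ι, ((⨆ j ∈ J, x j) ⊔ ⨆ k ∈ Jᶜ, y k)) ∧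
    ((⨅ i, x i ⊔ y i) = ⨆ J : Set ι, ((⨅ j ∈ J, x j) ⊓ ⨅ k ∈ Jᶜ, y k))

lemma clG_mono (K : FormalContext) {A B : Set K.G} (h : A ⊆ B) : K.clG A ⊆ K.clG B :=
  lowerPolar_anti _ (upperPolar_anti _ h)

lemma clG_idem (K : FormalContext) (A : Set K.G) : K.clG (K.clG A) = K.clG A := by
  unfold FormalContext.clG FormalContext.polarM FormalContext.polarG
  rw [upperPolar_lowerPolar_upperPolar]

lemma subset_clG (K : FormalContext) (A : Set K.G) : A ⊆ K.clG A :=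
  subset_lowerPolar_upperPolar _ _

/-- For closed relations `R : K1 → K2` and `S : K2 → K3`,
`cl((S ∘ R)(A)) = cl(S(R(A)))` for every `A ⊆ G1`. -/
theorem clImage_relComp (K1 K2 K3 : FormalContext)
    (R : K1.G → K2.G → Prop) (S : K2.G → K3.G → Prop)
    (hR : IsClosedRel K1 K2 R) (hS : IsClosedRel K2 K3 S) :
    ∀ A : Set K1.G,
      K3.clG (relImage (relComp K3 S R) A) = K3.clG (relImage S (relImage R A)) := by
  intro A
  apply subset_antisymm
  · have h1 : relImage (relComp K3 S R) A ⊆ K3.clG (relImage S (relImage R A)) := by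
      rintro h ⟨g, hg, hgh⟩
      refine clG_mono K3 ?_ hgh
      rintro y ⟨x, ⟨g', hg', hRx⟩, hSy⟩
      rw [Set.mem_singleton_iff] at hg'
      exact ⟨x, ⟨g, hg, hg' ▸ hRx⟩, hSy⟩
    calc K3.clG (relImage (relComp K3 S R) A)
        ⊆ K3.clG (K3.clG (relImage S (relImage R A))) := clG_mono K3 h1
      _ = K3.clG (relImage S (relImage R A)) := clG_idem K3 _
  · apply clG_mono
    rintro y ⟨x, ⟨g, hg, hRx⟩, hSy⟩
    exact ⟨g, hg, subset_clG K3 _ ⟨x, ⟨g, Set.mem_singleton g, hRx⟩, hSy⟩⟩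
end

section
/- Let R be a closed relation K1 → K2 between formal contexts. Define R* ⊆ M2 × M1 by R*(m2) := (R^•(m2'))' for each m2 ∈ M2. Then (R, R*) is a Chu correspondence K1 → K2. -/
open Set

/-- If `R` is a closed relation then `(R, R*)` is a Chu correspondence,
where `R*(m2) := (R^•(m2'))'`. -/
theorem closedRel_isChu_star (K1 K2 : FormalContext) (R : K1.G → K2.G → Prop)
    (hR : IsClosedRel K1 K2 R) :
    IsChu K1 K2 R (starRel K1 K2 R) := by
  have himg : ∀ m : K2.M, relImage (starRel K1 K2 R) {m}
      = K1.polarG (relDot R (K2.polarM {m})) := by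
    intro m
    ext n
    simp [relImage, starRel]
  refine ⟨hR.row_closed, ?_, ?_⟩
  · intro m
    rw [himg]
    exact upperPolar_lowerPolar_upperPolar _ _
  · intro g m
    have hDcl : K1.ClosedG (relDot R (K2.polarM {m})) :=
      hR.dot_closed _ (lowerPolar_upperPolar_lowerPolar _ _)
    constructor
    · intro h n hn
      rw [himg] at hn
      have hg : g ∈ relDot R (K2.polarM {m}) := by
        intro y hy
        intro b hb
        rcases hb with rfl
        exact h y ⟨g, rfl, hy⟩
      exact hn hg
    · intro h y hy
      rcases hy with ⟨x, hx, hxy⟩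
      rcases hx with rfl
      have hg : x ∈ K1.clG (relDot R (K2.polarM {m})) := by
        intro n hn
        exact h n (by rw [himg m]; exact hn)
      rw [hDcl] at hg
      exact hg y hxy rfl
end

section
/- Let (R,S) be a Chu correspondence K1 → K2 between formal contexts. Then R is a closed relation K1 → K2, S is a closed relation K2* → K1* between the dual contexts, and moreover S(m2) = (R^•(m2'))' for all m2 ∈ M2 and R(g1) = (S^•(g1'))' for all g1 ∈ G1. -/
open Set

section ChuAux

variable {K1 K2 : FormalContext} {R : K1.G → K2.G → Prop} {S : K2.M → K1.M → Prop}

lemma chu_mem_dotR (h : IsChu K1 K2 R S) (m : K2.M) (g : K1.G) :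
    g ∈ relDot R (K2.polarM {m}) ↔ ∀ n ∈ relImage S {m}, K1.I g n := by
  rw [← h.adj]
  constructor
  · intro hg k hk
    obtain ⟨x, hx, hR⟩ := hk
    cases hx
    exact hg k hR rfl
  · intro hg k hR b hb
    cases hb
    exact hg k ⟨g, rfl, hR⟩

lemma chu_mem_dotS (h : IsChu K1 K2 R S) (g : K1.G) (m : K2.M) :
    m ∈ relDot S (K1.polarG {g}) ↔ ∀ k ∈ relImage R {g}, K2.I k m := by
  rw [h.adj]
  constructor
  · intro hm n hn
    obtain ⟨x, hx, hS⟩ := hn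
    cases hx
    exact hm n hS rfl
  · intro hm n hS b hb
    cases hb
    exact hm n ⟨m, rfl, hS⟩

lemma chu_dotR_eq (h : IsChu K1 K2 R S) (m : K2.M) :
    relDot R (K2.polarM {m}) = lowerPolar K1.I (relImage S {m}) := by
  ext g
  exact chu_mem_dotR h m g

lemma chu_dotS_eq (h : IsChu K1 K2 R S) (g : K1.G) :
    relDot S (K1.polarG {g}) = upperPolar K2.I (relImage R {g}) := by
  ext m
  exact chu_mem_dotS h g m

lemma chu_dotR_closedSet (h : IsChu K1 K2 R S) (Y : Set K2.G) (hY : K2.ClosedG Y) :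
    relDot R Y = lowerPolar K1.I (⋃ m ∈ K2.polarG Y, relImage S {m}) := by
  ext g
  have hYe : Y = lowerPolar K2.I (K2.polarG Y) := hY.symm
  constructor
  · intro hg n hn
    simp only [Set.mem_iUnion] at hn
    obtain ⟨m, hm, hnm⟩ := hn
    have : g ∈ relDot R (K2.polarM {m}) := by
      intro k hk b hb
      cases hb
      have : k ∈ Y := hg k hk
      rw [hYe] at this
      exact this hm
    exact (chu_mem_dotR h m g).1 this n hnm
  · intro hg k hk
    rw [hYe]
    intro m hm
    have : g ∈ relDot R (K2.polarM {m}) := by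
      rw [chu_mem_dotR h m g]
      intro n hn
      exact hg (Set.mem_iUnion₂.2 ⟨m, hm, hn⟩)
    exact this k hk rfl

lemma chu_dotS_closedSet (h : IsChu K1 K2 R S) (Y : Set K1.M) (hY : K1.ClosedM Y) :
    relDot S Y = upperPolar K2.I (⋃ g ∈ K1.polarM Y, relImage R {g}) := by
  ext m
  have hYe : Y = upperPolar K1.I (K1.polarM Y) := hY.symm
  constructor
  · intro hm k hk
    simp only [Set.mem_iUnion] at hk
    obtain ⟨g, hg, hkg⟩ := hk
    have : m ∈ relDot S (K1.polarG {g}) := by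
      intro n hn b hb
      cases hb
      have : n ∈ Y := hm n hn
      rw [hYe] at this
      exact this hg
    exact (chu_mem_dotS h g m).1 this k hkg
  · intro hm n hn
    rw [hYe]
    intro g hg
    have : m ∈ relDot S (K1.polarG {g}) := by
      rw [chu_mem_dotS h g m]
      intro k hk
      exact hm (Set.mem_iUnion₂.2 ⟨g, hg, hk⟩)
    exact this n hn rfl

lemma closedG_extentClosure (K : FormalContext) (B : Set K.M) :
    K.ClosedG (lowerPolar K.I B) :=
  lowerPolar_upperPolar_lowerPolar K.I B

lemma closedM_intentClosure (K : FormalContext) (A : Set K.G) :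
    K.ClosedM (upperPolar K.I A) :=
  upperPolar_lowerPolar_upperPolar K.I A

lemma dual_closedG_iff (K : FormalContext) (B : Set K.M) :
    K.dual.ClosedG B ↔ K.ClosedM B := Iff.rfl

end ChuAux

/-- If `(R,S)` is a Chu correspondence `K1 → K2` then `R` is a closed
relation `K1 → K2`, `S` is a closed relation `K2* → K1*`, and `S(m2) = (R^•(m2'))'`,
`R(g1) = (S^•(g1'))'`. -/
theorem chu_closedRel (K1 K2 : FormalContext)
    (R : K1.G → K2.G → Prop) (S : K2.M → K1.M → Prop)
    (h : IsChu K1 K2 R S) :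
    IsClosedRel K1 K2 R ∧
    IsClosedRel K2.dual K1.dual S ∧
    (∀ m : K2.M, relImage S {m} = K1.polarG (relDot R (K2.polarM {m}))) ∧
    (∀ g : K1.G, relImage R {g} = K2.polarM (relDot S (K1.polarG {g}))) := by
  constructor
  · refine ⟨h.extent_closed, fun Y hY => ?_⟩
    rw [chu_dotR_closedSet h Y hY]
    exact closedG_extentClosure K1 _
  refine ⟨⟨fun m => h.intent_closed m, fun Y hY => ?_⟩, fun m => ?_, fun g => ?_⟩
  · change K1.ClosedM Y at hY
    change K2.ClosedM (relDot S Y)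
    rw [show relDot S Y = upperPolar K2.I (⋃ g ∈ K1.polarM Y, relImage R {g}) from
      chu_dotS_closedSet h Y hY]
    exact closedM_intentClosure K2 _
  · rw [FormalContext.polarG, chu_dotR_eq h m]
    exact (h.intent_closed m).symm
  · rw [FormalContext.polarM, chu_dotS_eq h g]
    exact (h.extent_closed g).symm
end

section
/- For formal contexts K1, K2, the map sending a Chu correspondence (R,S) : K1 → K2 to the relation B ⊆ G1 × M2 with B(g1) := R(g1)' is a bijection from the set of Chu correspondences K1 → K2 to the set of bonds from K1 to K2; its inverse sends a bond B to the pair (R,S) with R(g1) := B(g1)' and S(m2) := B†(m2)'. -/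
open Set

section ChuBondAux

variable {K1 K2 : FormalContext}

lemma relImage_singleton {X Y : Type*} (R : X → Y → Prop) (x : X) :
    relImage R {x} = {y | R x y} := by
  ext y; simp [relImage]

lemma polarG_closedM (K : FormalContext) (A : Set K.G) : K.ClosedM (K.polarG A) :=
  upperPolar_lowerPolar_upperPolar K.I A

lemma polarM_closedG (K : FormalContext) (B : Set K.M) : K.ClosedG (K.polarM B) :=
  lowerPolar_upperPolar_lowerPolar K.I B

lemma mem_polarG_iff (K : FormalContext) (A : Set K.G) (m : K.M) :
    m ∈ K.polarG A ↔ ∀ g ∈ A, K.I g m := Iff.rfl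

lemma mem_polarM_iff (K : FormalContext) (B : Set K.M) (g : K.G) :
    g ∈ K.polarM B ↔ ∀ m ∈ B, K.I g m := Iff.rfl

/-- Forward map: Chu correspondence to bond. -/
def chuToBond (K1 K2 : FormalContext) (R : K1.G → K2.G → Prop) : K1.G → K2.M → Prop :=
  fun g m => m ∈ K2.polarG (relImage R {g})

/-- Backward: object part. -/
def bondToR (K1 K2 : FormalContext) (B : K1.G → K2.M → Prop) : K1.G → K2.G → Prop :=
  fun g h => h ∈ K2.polarM (relImage B {g})

/-- Backward: attribute part. -/
def bondToS (K1 K2 : FormalContext) (B : K1.G → K2.M → Prop) : K2.M → K1.M → Prop :=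
  fun m n => n ∈ K1.polarG {g | B g m}

lemma chuToBond_row (R : K1.G → K2.G → Prop) (g : K1.G) :
    relImage (chuToBond K1 K2 R) {g} = K2.polarG (relImage R {g}) := by
  rw [relImage_singleton]; rfl

lemma chuToBond_col {R : K1.G → K2.G → Prop} {S : K2.M → K1.M → Prop}
    (h : IsChu K1 K2 R S) (m : K2.M) :
    {g | chuToBond K1 K2 R g m} = K1.polarM (relImage S {m}) := by
  ext g
  simp only [Set.mem_setOf_eq, chuToBond, mem_polarG_iff, mem_polarM_iff]
  exact h.adj g m

lemma chuToBond_isBond {R : K1.G → K2.G → Prop} {S : K2.M → K1.M → Prop}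
    (h : IsChu K1 K2 R S) : IsBond K1 K2 (chuToBond K1 K2 R) where
  row_closed g := by rw [chuToBond_row]; exact polarG_closedM K2 _
  col_closed m := by rw [chuToBond_col h]; exact polarM_closedG K1 _

lemma bondToR_row (B : K1.G → K2.M → Prop) (g : K1.G) :
    relImage (bondToR K1 K2 B) {g} = K2.polarM (relImage B {g}) := by
  rw [relImage_singleton]; rfl

lemma bondToS_row (B : K1.G → K2.M → Prop) (m : K2.M) :
    relImage (bondToS K1 K2 B) {m} = K1.polarG {g | B g m} := by
  rw [relImage_singleton]; rfl

lemma bondTo_isChu {B : K1.G → K2.M → Prop} (h : IsBond K1 K2 B) :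
    IsChu K1 K2 (bondToR K1 K2 B) (bondToS K1 K2 B) where
  extent_closed g := by rw [bondToR_row]; exact polarM_closedG K2 _
  intent_closed m := by rw [bondToS_row]; exact polarG_closedM K1 _
  adj g m := by
    have hrow : (∀ h' ∈ relImage (bondToR K1 K2 B) {g}, K2.I h' m) ↔ B g m := by
      rw [bondToR_row]
      constructor
      · intro hm
        have : m ∈ K2.clM (relImage B {g}) := hm
        rw [h.row_closed g] at this
        rw [relImage_singleton] at this
        exact this
      · intro hb h' hh'
        exact hh' (by rw [relImage_singleton]; exact hb)
    have hcol : (∀ n ∈ relImage (bondToS K1 K2 B) {m}, K1.I g n) ↔ B g m := by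
      rw [bondToS_row]
      constructor
      · intro hn
        have : g ∈ K1.clG {g' | B g' m} := hn
        rw [h.col_closed m] at this
        exact this
      · intro hb n hn
        exact hn hb
    rw [hrow, hcol]

end ChuBondAux

/-- Sending a Chu correspondence `(R,S)` to the bond `B(g1) := R(g1)'`
is a bijection from Chu correspondences `K1 → K2` to bonds from `K1` to `K2`, with
inverse sending a bond `B` to `(R,S)` where `R(g1) := B(g1)'` and `S(m2) := B†(m2)'`. -/
theorem chu_equiv_bond (K1 K2 : FormalContext) :
    ∃ e : {p : (K1.G → K2.G → Prop) × (K2.M → K1.M → Prop) // IsChu K1 K2 p.1 p.2} ≃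
          {B : K1.G → K2.M → Prop // IsBond K1 K2 B},
      (∀ p, (e p).1 = fun g m => m ∈ K2.polarG (relImage p.1.1 {g})) ∧
      (∀ B, (e.symm B).1.1 = fun g h => h ∈ K2.polarM (relImage B.1 {g})) ∧
      (∀ B, (e.symm B).1.2 = fun m n => n ∈ K1.polarG {g | B.1 g m}) := by
  refine ⟨{
    toFun := fun p => ⟨chuToBond K1 K2 p.1.1, chuToBond_isBond p.2⟩
    invFun := fun B => ⟨(bondToR K1 K2 B.1, bondToS K1 K2 B.1), bondTo_isChu B.2⟩
    left_inv := ?_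
    right_inv := ?_ }, fun p => rfl, fun B => rfl, fun B => rfl⟩
  · rintro ⟨⟨R, S⟩, hp⟩
    apply Subtype.ext
    dsimp only
    congr 1
    · funext g h
      apply propext
      show h ∈ K2.polarM (relImage (chuToBond K1 K2 R) {g}) ↔ R g h
      rw [chuToBond_row]
      have : K2.polarM (K2.polarG (relImage R {g})) = relImage R {g} := hp.extent_closed g
      rw [this, relImage_singleton]
      rfl
    · funext m n
      apply propext
      show n ∈ K1.polarG {g | chuToBond K1 K2 R g m} ↔ S m n
      rw [chuToBond_col hp]
      have : K1.polarG (K1.polarM (relImage S {m})) = relImage S {m} := hp.intent_closed m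
      rw [this, relImage_singleton]
      rfl
  · rintro ⟨B, hB⟩
    apply Subtype.ext
    dsimp only
    funext g m
    apply propext
    show m ∈ K2.polarG (relImage (bondToR K1 K2 B) {g}) ↔ B g m
    rw [bondToR_row]
    have : K2.polarG (K2.polarM (relImage B {g})) = relImage B {g} := hB.row_closed g
    rw [this, relImage_singleton]
    rfl
end

section
/- Let K1 = (G1,M1,I1) and K2 = (G2,M2,I2) be formal contexts and B ⊆ G1 × M2 a relation; for Y ⊆ M2 set C_•(Y) := {g ∈ G1 | (g,y) ∈ B for all y ∈ Y}. Then B is a bond from K1 to K2 if and only if for every Y ⊆ M2 one has cl(C_•(Y)) = C_•(Y) = C_•(cl(Y)), where cl(C_•(Y)) is the closure in K1 and cl(Y) is the closure in K2 on the attribute side. -/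
open Set

/-- A relation `B ⊆ G1 × M2` is a bond iff for every `Y ⊆ M2`,
`cl(C_•(Y)) = C_•(Y) = C_•(cl(Y))` where `C_•(Y) = {g | (g,y) ∈ B for all y ∈ Y}`. -/
theorem bond_iff_compatible (K1 K2 : FormalContext) (B : K1.G → K2.M → Prop) :
    IsBond K1 K2 B ↔
      ∀ Y : Set K2.M,
        K1.clG {g | ∀ y ∈ Y, B g y} = {g | ∀ y ∈ Y, B g y} ∧
        {g | ∀ y ∈ Y, B g y} = {g | ∀ y ∈ K2.clM Y, B g y} := by
  constructor
  · intro hb Y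
    constructor
    · apply Set.Subset.antisymm
      · intro g hg y hy
        have hcol := hb.col_closed y
        have hsub : {g | ∀ y ∈ Y, B g y} ⊆ {g' | B g' y} := fun g' hg' => hg' y hy
        have : K1.clG {g | ∀ y ∈ Y, B g y} ⊆ K1.clG {g' | B g' y} :=
          lowerPolar_anti _ (upperPolar_anti _ hsub)
        have hc : K1.clG {g' | B g' y} = {g' | B g' y} := hcol
        exact (hc ▸ this) hg
      · exact subset_lowerPolar_upperPolar _ _
    · ext g
      simp only [Set.mem_setOf_eq]
      constructor
      · intro hg y hy
        have hrow := hb.row_closed g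
        have hYsub : Y ⊆ relImage B {g} := fun m hm => ⟨g, rfl, hg m hm⟩
        have : K2.clM Y ⊆ K2.clM (relImage B {g}) :=
          upperPolar_anti _ (lowerPolar_anti _ hYsub)
        have hr : K2.clM (relImage B {g}) = relImage B {g} := hrow
        obtain ⟨x, hx, hBx⟩ := (hr ▸ this) hy
        exact hx ▸ hBx
      · intro hg y hy
        exact hg y (subset_upperPolar_lowerPolar _ Y hy)
  · intro h
    constructor
    · intro g
      have hY : relImage B {g} = {m | B g m} := by
        ext m; constructor
        · rintro ⟨x, rfl, hx⟩; exact hx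
        · intro hm; exact ⟨g, rfl, hm⟩
      rw [hY]
      have h2 := (h {m | B g m}).2
      have hg : g ∈ {g' | ∀ y ∈ {m | B g m}, B g' y} := fun y hy => hy
      rw [h2] at hg
      apply Set.Subset.antisymm
      · intro m hm; exact hg m hm
      · exact subset_upperPolar_lowerPolar _ _
    · intro m
      have h1 := (h {m}).1
      have : {g | ∀ y ∈ ({m} : Set K2.M), B g y} = {g | B g m} := by
        ext g; simp
      rw [this] at h1
      exact h1
end

section
/- Let K1 = (G1,M1,I1) and K2 = (G2,M2,I2) be formal contexts and K1 ⊗ K2 their direct product. Then: (i) for all A ⊆ G1, B ⊆ G2, C ⊆ M1, D ⊆ M2, one has A×B ∇ C×D (i.e. (a,b) ∇ (c,d) for all a∈A, b∈B, c∈C, d∈D) if and only if A I1 C or B I2 D; and (ii) for all A ⊆ G1 and B ⊆ G2, cl(A×B) = cl(cl(A)×cl(B)) = (cl(A)×cl(B)) ∪ (M1×M2)', where cl(A×B) and (M1×M2)' are taken in K1 ⊗ K2 while cl(A), cl(B) are taken in K1, K2 respectively. -/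
open Set

section Aux
variable {G M : Type*}

lemma mem_ic (I : G → M → Prop) (A : Set G) (m : M) :
    m ∈ upperPolar I A ↔ ∀ a ∈ A, I a m :=
  ⟨fun h a ha => h ha, fun h a ha => h a ha⟩

lemma mem_ec (I : G → M → Prop) (B : Set M) (g : G) :
    g ∈ lowerPolar I B ↔ ∀ m ∈ B, I g m :=
  ⟨fun h a ha => h ha, fun h a ha => h a ha⟩

lemma polarG_clG (K : FormalContext) (A : Set K.G) : K.polarG (K.clG A) = K.polarG A :=
  upperPolar_lowerPolar_upperPolar K.I A

lemma polarG_dprod (K1 K2 : FormalContext) (A : Set K1.G) (B : Set K2.G) :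
    (K1.dprod K2).polarG (A ×ˢ B) =
      {m : K1.M × K2.M | m.1 ∈ K1.polarG A ∨ m.2 ∈ K2.polarG B} := by
  ext ⟨m1, m2⟩
  simp only [FormalContext.polarG, mem_ic, Set.mem_setOf_eq]
  constructor
  · intro h
    by_cases h1 : ∀ a ∈ A, K1.I a m1
    · exact Or.inl h1
    · push_neg at h1
      obtain ⟨a, ha, hac⟩ := h1
      right
      intro b hb
      rcases h (a := (a, b)) (Set.mk_mem_prod ha hb) with h' | h'
      · exact absurd h' hac
      · exact h'
  · rintro (h | h) ⟨a, b⟩ hab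
    · exact Or.inl (h a hab.1)
    · exact Or.inr (h b hab.2)

end Aux

/-- In the direct product `K1 ⊗ K2`:
(i) `A×B ∇ C×D` iff `A I1 C` or `B I2 D`;
(ii) `cl(A×B) = cl(cl(A)×cl(B)) = (cl(A)×cl(B)) ∪ (M1×M2)'`. -/
theorem dprod_basic (K1 K2 : FormalContext) :
    (∀ (A : Set K1.G) (B : Set K2.G) (C : Set K1.M) (D : Set K2.M),
      (∀ a ∈ A, ∀ b ∈ B, ∀ c ∈ C, ∀ d ∈ D, (K1.dprod K2).I (a, b) (c, d)) ↔
        ((∀ a ∈ A, ∀ c ∈ C, K1.I a c) ∨ (∀ b ∈ B, ∀ d ∈ D, K2.I b d))) ∧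
    (∀ (A : Set K1.G) (B : Set K2.G),
      (K1.dprod K2).clG (A ×ˢ B) = (K1.dprod K2).clG (K1.clG A ×ˢ K2.clG B) ∧
      (K1.dprod K2).clG (A ×ˢ B) =
        (K1.clG A ×ˢ K2.clG B) ∪ (K1.dprod K2).polarM Set.univ) := by
  constructor
  · intro A B C D
    constructor
    · intro h
      by_cases h1 : ∀ a ∈ A, ∀ c ∈ C, K1.I a c
      · exact Or.inl h1
      · push_neg at h1
        obtain ⟨a, ha, c, hc, hac⟩ := h1
        right
        intro b hb d hd
        rcases h a ha b hb c hc d hd with h' | h'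
        · exact absurd h' hac
        · exact h'
    · rintro (h | h) a ha b hb c hc d hd
      · exact Or.inl (h a ha c hc)
      · exact Or.inr (h b hb d hd)
  · intro A B
    have hp : (K1.dprod K2).polarG (K1.clG A ×ˢ K2.clG B) = (K1.dprod K2).polarG (A ×ˢ B) := by
      rw [polarG_dprod, polarG_dprod, polarG_clG, polarG_clG]
    constructor
    · show (K1.dprod K2).polarM _ = (K1.dprod K2).polarM _
      rw [hp]
    · ext ⟨g1, g2⟩
      simp only [FormalContext.clG, FormalContext.polarM, mem_ec, polarG_dprod,
        Set.mem_setOf_eq, Set.mem_union, Set.mem_prod]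
      constructor
      · intro h
        by_cases h1 : g1 ∈ K1.clG A
        · by_cases h2 : g2 ∈ K2.clG B
          · exact Or.inl ⟨h1, h2⟩
          · right
            simp only [FormalContext.clG, FormalContext.polarM, mem_ec] at h2
            push_neg at h2
            obtain ⟨m2, hm2, hg2⟩ := h2
            intro ⟨n1, n2⟩ _
            rcases h (b := (n1, m2)) (Or.inr hm2) with h' | h'
            · exact Or.inl h'
            · exact absurd h' hg2
        · right
          simp only [FormalContext.clG, FormalContext.polarM, mem_ec] at h1
          push_neg at h1
          obtain ⟨m1, hm1, hg1⟩ := h1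
          intro ⟨n1, n2⟩ _
          rcases h (b := (m1, n2)) (Or.inl hm1) with h' | h'
          · exact absurd h' hg1
          · exact Or.inr h'
      · rintro (⟨h1, h2⟩ | h) ⟨m1, m2⟩ hm
        · simp only [FormalContext.clG, FormalContext.polarM, mem_ec] at h1 h2
          rcases hm with hm | hm
          · exact Or.inl (h1 m1 hm)
          · exact Or.inr (h2 m2 hm)
        · exact h (b := (m1, m2)) (Set.mem_univ _)
end

section
/- Let V1, V2, M be complete lattices and let f : V1 → M and g : V2 → M preserve arbitrary suprema, with ranges f(V1) and g(V2) mutually distributive in M. Then there exists a unique suprema-preserving map h : V1 ⊗ V2 → M such that h(x ⊼ y) = f(x) ⊓ g(y) for all x ∈ V1, y ∈ V2. Moreover, if f and g additionally preserve arbitrary infima, then so does h. -/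
open Set

section Aux16

set_option linter.unusedSectionVars false



variable {V1 V2 M : Type*} [CompleteLattice V1] [CompleteLattice V2] [CompleteLattice M]
variable (f : V1 → M) (g : V2 → M)

/-- sup over extent -/
def hset (A : Set (V1 × V2)) : M := ⨆ p ∈ A, f p.1 ⊓ g p.2

/-- inf over intent -/
def iset (B : Set (V1 × V2)) : M := ⨅ p ∈ B, f p.1 ⊔ g p.2

lemma mono_of_sup (hf : ∀ s : Set V1, f (sSup s) = sSup (f '' s)) : Monotone f := by
  intro a b hab
  have h := hf {a, b}
  rw [sSup_pair, sup_eq_right.2 hab] at h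
  rw [h]
  simp [image_pair]

lemma mono_of_inf (hf : ∀ s : Set V1, f (sInf s) = sInf (f '' s)) : Monotone f := by
  intro a b hab
  have h := hf {a, b}
  rw [sInf_pair, inf_eq_left.2 hab] at h
  rw [h]
  simp [image_pair]

lemma img_fst_mem (A : Set (V1 × V2)) (i : ↥((fun q : V1 × V2 => (f q.1, g q.2)) '' A)) :
    (i : M × M).1 ∈ range f := by
  obtain ⟨q, _, hq⟩ := i.2
  exact ⟨q.1, congrArg Prod.fst hq⟩

lemma img_snd_mem (A : Set (V1 × V2)) (i : ↥((fun q : V1 × V2 => (f q.1, g q.2)) '' A)) :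
    (i : M × M).2 ∈ range g := by
  obtain ⟨q, _, hq⟩ := i.2
  exact ⟨q.2, congrArg Prod.snd hq⟩

lemma hset_eq_iInf
    (hdist : MutuallyDistrib (Set.range f) (Set.range g)) (A : Set (V1 × V2)) :
    hset f g A = ⨅ J : Set ↥((fun q : V1 × V2 => (f q.1, g q.2)) '' A),
      ((⨆ j ∈ J, (j : M × M).1) ⊔ ⨆ k ∈ Jᶜ, (k : M × M).2) := by
  obtain ⟨law1, _⟩ := hdist ↥((fun q : V1 × V2 => (f q.1, g q.2)) '' A)
    (fun i => (i : M × M).1) (fun i => (i : M × M).2)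
    (img_fst_mem f g A) (img_snd_mem f g A)
  rw [← law1, hset,
    iSup_subtype'' ((fun q : V1 × V2 => (f q.1, g q.2)) '' A) (fun m : M × M => m.1 ⊓ m.2),
    iSup_image]

lemma iset_eq_iSup
    (hdist : MutuallyDistrib (Set.range f) (Set.range g)) (B : Set (V1 × V2)) :
    iset f g B = ⨆ J : Set ↥((fun q : V1 × V2 => (f q.1, g q.2)) '' B),
      ((⨅ j ∈ J, (j : M × M).1) ⊓ ⨅ k ∈ Jᶜ, (k : M × M).2) := by
  obtain ⟨_, law2⟩ := hdist ↥((fun q : V1 × V2 => (f q.1, g q.2)) '' B)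
    (fun i => (i : M × M).1) (fun i => (i : M × M).2)
    (img_fst_mem f g B) (img_snd_mem f g B)
  rw [← law2, iset,
    iInf_subtype'' ((fun q : V1 × V2 => (f q.1, g q.2)) '' B) (fun m : M × M => m.1 ⊔ m.2),
    iInf_image]

/-- For each J, produce (a,b) in the intent of A bounding the two sups. -/
lemma exists_ab (hf : ∀ s : Set V1, f (sSup s) = sSup (f '' s))
    (hg : ∀ s : Set V2, g (sSup s) = sSup (g '' s))
    (A : Set (V1 × V2)) (J : Set ↥((fun q : V1 × V2 => (f q.1, g q.2)) '' A)) :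
    ∃ a b, (a, b) ∈ upperPolar (tensorRel V1 V2) A ∧
      f a ≤ (⨆ j ∈ J, (j : M × M).1) ∧ g b ≤ ⨆ k ∈ Jᶜ, (k : M × M).2 := by
  have himg : ∀ q : V1 × V2, q ∈ A → (f q.1, g q.2) ∈ (fun q : V1 × V2 => (f q.1, g q.2)) '' A :=
    fun q hq => mem_image_of_mem _ hq
  refine ⟨sSup (Prod.fst '' {q : V1 × V2 | ∃ hq : q ∈ A,
      (⟨(f q.1, g q.2), himg _ hq⟩ : _) ∈ J}),
    sSup (Prod.snd '' {q : V1 × V2 | ∃ hq : q ∈ A,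
      (⟨(f q.1, g q.2), himg _ hq⟩ : _) ∉ J}), ?_, ?_, ?_⟩
  · intro q hq
    by_cases hJ : (⟨(f q.1, g q.2), himg _ hq⟩ : _) ∈ J
    · exact Or.inl (le_sSup (mem_image_of_mem _ ⟨hq, hJ⟩))
    · exact Or.inr (le_sSup (mem_image_of_mem _ ⟨hq, hJ⟩))
  · rw [hf, sSup_le_iff]
    rintro m ⟨w, ⟨q, ⟨hq, hJ⟩, rfl⟩, rfl⟩
    simpa using le_iSup₂ (f := fun (j : _) (_ : j ∈ J) => (j : M × M).1)
      (⟨(f q.1, g q.2), himg _ hq⟩ : _) hJ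
  · rw [hg, sSup_le_iff]
    rintro m ⟨w, ⟨q, ⟨hq, hJ⟩, rfl⟩, rfl⟩
    simpa using le_iSup₂ (f := fun (k : _) (_ : k ∈ Jᶜ) => (k : M × M).2)
      (⟨(f q.1, g q.2), himg _ hq⟩ : _) hJ

/-- Dual version with infs, for the intent side. -/
lemma exists_ab' (hf : ∀ s : Set V1, f (sInf s) = sInf (f '' s))
    (hg : ∀ s : Set V2, g (sInf s) = sInf (g '' s))
    (B : Set (V1 × V2)) (J : Set ↥((fun q : V1 × V2 => (f q.1, g q.2)) '' B)) :
    ∃ a b, (a, b) ∈ lowerPolar (tensorRel V1 V2) B ∧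
      (⨅ j ∈ J, (j : M × M).1) ≤ f a ∧ (⨅ k ∈ Jᶜ, (k : M × M).2) ≤ g b := by
  have himg : ∀ q : V1 × V2, q ∈ B → (f q.1, g q.2) ∈ (fun q : V1 × V2 => (f q.1, g q.2)) '' B :=
    fun q hq => mem_image_of_mem _ hq
  refine ⟨sInf (Prod.fst '' {q : V1 × V2 | ∃ hq : q ∈ B,
      (⟨(f q.1, g q.2), himg _ hq⟩ : _) ∈ J}),
    sInf (Prod.snd '' {q : V1 × V2 | ∃ hq : q ∈ B,
      (⟨(f q.1, g q.2), himg _ hq⟩ : _) ∉ J}), ?_, ?_, ?_⟩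
  · intro q hq
    by_cases hJ : (⟨(f q.1, g q.2), himg _ hq⟩ : _) ∈ J
    · exact Or.inl (sInf_le (mem_image_of_mem _ ⟨hq, hJ⟩))
    · exact Or.inr (sInf_le (mem_image_of_mem _ ⟨hq, hJ⟩))
  · rw [hf, le_sInf_iff]
    rintro m ⟨w, ⟨q, ⟨hq, hJ⟩, rfl⟩, rfl⟩
    simpa using iInf₂_le (f := fun (j : _) (_ : j ∈ J) => (j : M × M).1)
      (⟨(f q.1, g q.2), himg _ hq⟩ : _) hJ
  · rw [hg, le_sInf_iff]
    rintro m ⟨w, ⟨q, ⟨hq, hJ⟩, rfl⟩, rfl⟩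
    simpa using iInf₂_le (f := fun (k : _) (_ : k ∈ Jᶜ) => (k : M × M).2)
      (⟨(f q.1, g q.2), himg _ hq⟩ : _) hJ

lemma hset_closure (hf : ∀ s : Set V1, f (sSup s) = sSup (f '' s))
    (hg : ∀ s : Set V2, g (sSup s) = sSup (g '' s))
    (hdist : MutuallyDistrib (Set.range f) (Set.range g)) (A : Set (V1 × V2)) :
    hset f g (lowerPolar (tensorRel V1 V2) (upperPolar (tensorRel V1 V2) A))
      = hset f g A := by
  refine le_antisymm ?_ (iSup₂_mono' fun p hp => ⟨p, subset_lowerPolar_upperPolar _ _ hp, le_rfl⟩)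
  refine iSup₂_le fun p hp => ?_
  rw [hset_eq_iInf f g hdist A]
  refine le_iInf fun J => ?_
  obtain ⟨a, b, hab, ha, hb⟩ := exists_ab f g hf hg A J
  rcases hp hab with h | h
  · exact le_trans inf_le_left (le_trans ((mono_of_sup f hf) h) (le_trans ha le_sup_left))
  · exact le_trans inf_le_right (le_trans ((mono_of_sup g hg) h) (le_trans hb le_sup_right))

lemma hset_eq_iset (hf : ∀ s : Set V1, f (sSup s) = sSup (f '' s))
    (hg : ∀ s : Set V2, g (sSup s) = sSup (g '' s))
    (hdist : MutuallyDistrib (Set.range f) (Set.range g)) (A : Set (V1 × V2)) :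
    hset f g A = iset f g (upperPolar (tensorRel V1 V2) A) := by
  refine le_antisymm ?_ ?_
  · refine iSup₂_le fun q hq => le_iInf₂ fun m hm => ?_
    rcases hm hq with h | h
    · exact le_trans inf_le_left (le_trans ((mono_of_sup f hf) h) le_sup_left)
    · exact le_trans inf_le_right (le_trans ((mono_of_sup g hg) h) le_sup_right)
  · rw [hset_eq_iInf f g hdist A]
    refine le_iInf fun J => ?_
    obtain ⟨a, b, hab, ha, hb⟩ := exists_ab f g hf hg A J
    exact le_trans (iInf₂_le (a, b) hab) (sup_le_sup ha hb)

lemma iset_closure (hf : ∀ s : Set V1, f (sInf s) = sInf (f '' s))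
    (hg : ∀ s : Set V2, g (sInf s) = sInf (g '' s))
    (hdist : MutuallyDistrib (Set.range f) (Set.range g)) (B : Set (V1 × V2)) :
    iset f g (upperPolar (tensorRel V1 V2) (lowerPolar (tensorRel V1 V2) B))
      = iset f g B := by
  refine le_antisymm (iInf₂_mono' fun p hp => ⟨p, subset_upperPolar_lowerPolar _ _ hp, le_rfl⟩) ?_
  refine le_iInf₂ fun m hm => ?_
  rw [iset_eq_iSup f g hdist B]
  refine iSup_le fun J => ?_
  obtain ⟨a, b, hab, ha, hb⟩ := exists_ab' f g hf hg B J
  rcases hm hab with h | h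
  · exact le_trans inf_le_left (le_trans ha (le_trans ((mono_of_inf f hf) h) le_sup_left))
  · exact le_trans inf_le_right (le_trans hb (le_trans ((mono_of_inf g hg) h) le_sup_right))


lemma wedge_decomp {V1 V2 : Type*} [CompleteLattice V1] [CompleteLattice V2]
    (c : ConceptTensor V1 V2) :
    sSup ((fun p : V1 × V2 => wedge p.1 p.2) '' c.extent) = c := by
  apply Concept.ext
  rw [Concept.extent_sSup]
  have h1 : (⋂ d ∈ (fun p : V1 × V2 => wedge p.1 p.2) '' c.extent,
      (d : ConceptTensor V1 V2).intent) = c.intent := by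
    rw [biInter_image]
    calc ⋂ p ∈ c.extent, (wedge p.1 p.2).intent
        = ⋂ p ∈ c.extent, upperPolar (tensorRel V1 V2) {p} :=
          iInter₂_congr fun p _ => rfl
      _ = upperPolar (tensorRel V1 V2) (⋃ p ∈ c.extent, {p}) := by
          rw [upperPolar_iUnion₂]
      _ = upperPolar (tensorRel V1 V2) c.extent := by rw [biUnion_of_singleton]
      _ = c.intent := c.upperPolar_extent
  rw [h1, c.lowerPolar_intent]

end Aux16

/-- For suprema-preserving `f : V1 → M`, `g : V2 → M` with mutually
distributive ranges, there is a unique suprema-preserving `h : V1 ⊗ V2 → M` with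
`h(x ⊼ y) = f(x) ⊓ g(y)`; if moreover `f` and `g` preserve infima, so does `h`. -/
theorem tensor_universal_sup (V1 V2 M : Type*)
    [CompleteLattice V1] [CompleteLattice V2] [CompleteLattice M]
    (f : V1 → M) (g : V2 → M)
    (hf : ∀ s : Set V1, f (sSup s) = sSup (f '' s))
    (hg : ∀ s : Set V2, g (sSup s) = sSup (g '' s))
    (hdist : MutuallyDistrib (Set.range f) (Set.range g)) :
    (∃! h : ConceptTensor V1 V2 → M,
      (∀ s : Set (ConceptTensor V1 V2), h (sSup s) = sSup (h '' s)) ∧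
      ∀ (x : V1) (y : V2), h (wedge x y) = f x ⊓ g y) ∧
    ((∀ s : Set V1, f (sInf s) = sInf (f '' s)) →
     (∀ s : Set V2, g (sInf s) = sInf (g '' s)) →
     ∀ h : ConceptTensor V1 V2 → M,
       ((∀ s : Set (ConceptTensor V1 V2), h (sSup s) = sSup (h '' s)) ∧
        ∀ (x : V1) (y : V2), h (wedge x y) = f x ⊓ g y) →
       ∀ s : Set (ConceptTensor V1 V2), h (sInf s) = sInf (h '' s)) := by
  classical
  set h0 : ConceptTensor V1 V2 → M := fun c => hset f g c.extent with hh0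
  have hwedge : ∀ (x : V1) (y : V2), h0 (wedge x y) = f x ⊓ g y := by
    intro x y
    show hset f g (lowerPolar (tensorRel V1 V2)
      (upperPolar (tensorRel V1 V2) {(x, y)})) = _
    rw [hset_closure f g hf hg hdist]
    simp [hset]
  have hsup : ∀ s : Set (ConceptTensor V1 V2), h0 (sSup s) = sSup (h0 '' s) := by
    intro S
    show hset f g (sSup S).extent = _
    rw [Concept.extent_sSup]
    have h1 : (⋂ c ∈ S, (c : ConceptTensor V1 V2).intent)
        = upperPolar (tensorRel V1 V2) (⋃ c ∈ S, (c : ConceptTensor V1 V2).extent) := by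
      rw [upperPolar_iUnion₂]
      exact iInter₂_congr fun c _ => c.upperPolar_extent.symm
    rw [h1, hset_closure f g hf hg hdist, sSup_image]
    show (⨆ p ∈ ⋃ c ∈ S, (c : ConceptTensor V1 V2).extent, f p.1 ⊓ g p.2) = _
    simp only [iSup_iUnion]
    rfl
  have key : ∀ h' : ConceptTensor V1 V2 → M,
      ((∀ s : Set (ConceptTensor V1 V2), h' (sSup s) = sSup (h' '' s)) ∧
        ∀ (x : V1) (y : V2), h' (wedge x y) = f x ⊓ g y) → ∀ c, h' c = h0 c := by
    rintro h' ⟨hs, hw⟩ c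
    conv_lhs => rw [← wedge_decomp c]
    rw [hs, ← image_comp, sSup_image]
    show (⨆ p ∈ c.extent, h' (wedge p.1 p.2)) = _
    simp only [hw]
    rfl
  refine ⟨⟨h0, ⟨hsup, hwedge⟩, fun h' hp => funext fun c => key h' hp c⟩, ?_⟩
  intro hf' hg' h' hp S
  have he : ∀ c, h' c = h0 c := key h' hp
  rw [he, show h' '' S = h0 '' S from image_congr fun c _ => he c]
  show hset f g (sInf S).extent = _
  rw [Concept.extent_sInf, sInf_image]
  have h2 : (⋂ c ∈ S, (c : ConceptTensor V1 V2).extent)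
      = lowerPolar (tensorRel V1 V2) (⋃ c ∈ S, (c : ConceptTensor V1 V2).intent) := by
    rw [lowerPolar_iUnion₂]
    exact iInter₂_congr fun c _ => c.lowerPolar_intent.symm
  rw [h2, hset_eq_iset f g hf hg hdist, iset_closure f g hf' hg' hdist]
  show (⨅ p ∈ ⋃ c ∈ S, (c : ConceptTensor V1 V2).intent, f p.1 ⊔ g p.2) = _
  simp only [iInf_iUnion]
  refine iInf_congr fun c => iInf_congr fun hc => ?_
  show iset f g c.intent = h0 c
  rw [← c.upperPolar_extent, ← hset_eq_iset f g hf hg hdist]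
end
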